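/- arXiv:1903.09428 — 2 statements merged into one kernel-verified Lean document; each statement's English description precedes it below -/
import Mathlib

section
/- There exists a constant C > 0 such that for all b ∈ (0,1): |c_0(b,1)| ≤ C b², and for every integer n ≥ 1, 0 ≤ n − c_n(b,1) ≤ b^{2n+2}/(n+1). In particular sup_{n ≥ 0} |c_n(b,1) − n|/(1+n) → 0 as b → 0, i.e. the Dirichlet-to-Neumann maps of the potentials q_b = χ_{(0,b)}(|x|) converge to that of the zero potential (whose eigenvalues are c_n = n) although ‖q_b − 0‖_{L^∞} = 1 for all b. -/
open Real Set MeasureTheory Filter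

/-- Bessel function of the first kind of integer order, via the Poisson integral
representation. -/
noncomputable def besselJ (n : ℕ) (r : ℝ) : ℝ :=
  r ^ n / (2 ^ n * Real.Gamma ((n : ℝ) + 1 / 2) * Real.sqrt Real.pi) *
    ∫ t in (-1 : ℝ)..1, Real.cos (r * t) * (1 - t ^ 2) ^ ((n : ℝ) - 1 / 2)

/-- The eigenvalues `c_n(b,1)` of the Dirichlet-to-Neumann map for the one-step radial
potential `q = χ_{(0,b)}(|x|)` on the unit disk. -/
noncomputable def cEig (n : ℕ) (b : ℝ) : ℝ :=
  if n = 0 then -(b * besselJ 1 b) / (b * Real.log b * besselJ 1 b + besselJ 0 b)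
  else n * (besselJ (n - 1) b - b ^ (2 * n) * besselJ (n + 1) b) /
    (besselJ (n - 1) b + b ^ (2 * n) * besselJ (n + 1) b)

/-- The one-step radial potential `q(x) = χ_{(0,b)}(|x|)` on the plane. -/
noncomputable def stepPot (b : ℝ) : EuclideanSpace ℝ (Fin 2) → ℝ :=
  Set.indicator (Metric.ball 0 b) fun _ => 1

/-!
In angular form `J_n(b) = b^n/(2^n Γ(n+1/2) √π) · P_n(b)` with
`P_n(b) = ∫₀^π cos (b cos θ) sin^{2n} θ dθ`. For `0 < b ≤ 1` the integrand is positive and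
decreasing in `n` (for `P₂` against `P₀` one compares with `∫ sin⁴` and `∫ 1 - cos²/2`), so
the ratio of the normalizing constants gives `2n(n+1) J_{n+1}(b) ≤ b² J_{n-1}(b)`. Since
`n - c_n = 2n b^{2n} J_{n+1} / (J_{n-1} + b^{2n} J_{n+1})`, this is the bound for `n ≥ 1`,
and it makes every term of the supremum at most `2b²`.
-/
noncomputable def poissonIntegral (n : ℕ) (b : ℝ) : ℝ :=
  ∫ θ in 0..π, cos (b * cos θ) * sin θ ^ (2 * n)

lemma rpow_natCast_sub_half {s : ℝ} (hs : 0 ≤ s) (n : ℕ) :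
    s ^ ((n : ℝ) - 1 / 2) = s ^ n * √s⁻¹ := by
  rcases hs.eq_or_lt with rfl | hs
  · have hn : (n : ℝ) - 1 / 2 ≠ 0 := by
      intro h
      have : (n : ℝ) * 2 = 1 := by linarith
      norm_cast at this
      omega
    rw [Real.zero_rpow hn]
    simp
  · rw [Real.rpow_sub hs, Real.rpow_natCast, Real.sqrt_inv, Real.sqrt_eq_rpow, div_eq_mul_inv]

/-- The substitution `t = cos θ` turns the Poisson integral over `[-1, 1]` into the
angular one; the singular weight `(1 - t²)^{-1/2}` is absorbed by `dt = -sin θ dθ`. -/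
lemma besselJ_eq_mul_poissonIntegral (n : ℕ) (b : ℝ) :
    besselJ n b = b ^ n / (2 ^ n * Gamma ((n : ℝ) + 1 / 2) * √π) * poissonIntegral n b := by
  rw [besselJ, poissonIntegral]
  congr 1
  calc ∫ t in (-1 : ℝ)..1, cos (b * t) * (1 - t ^ 2) ^ ((n : ℝ) - 1 / 2)
      = ∫ t in (-1 : ℝ)..1, cos (b * t) * (1 - t ^ 2) ^ n * √(1 - t ^ 2)⁻¹ := by
        refine intervalIntegral.integral_congr fun t ht => ?_
        rw [uIcc_of_le (by norm_num)] at ht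
        have hs : 0 ≤ 1 - t ^ 2 := by nlinarith [ht.1, ht.2]
        simp only [rpow_natCast_sub_half hs, mul_assoc]
    _ = ∫ θ in 0..π, cos (b * cos θ) * (1 - cos θ ^ 2) ^ n := by
        rw [← Polynomial.Chebyshev.integral_measureT,
          Polynomial.Chebyshev.integral_measureT_eq_integral_cos]
    _ = ∫ θ in 0..π, cos (b * cos θ) * sin θ ^ (2 * n) := by
        simp only [← sin_sq, pow_mul]

lemma cos_mul_cos_pos {b : ℝ} (hb : |b| ≤ 1) (θ : ℝ) : 0 < cos (b * cos θ) := by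
  have h : |b * cos θ| ≤ 1 := by
    rw [abs_mul]
    nlinarith [abs_cos_le_one θ, abs_nonneg b, abs_nonneg (cos θ)]
  apply cos_pos_of_mem_Ioo
  constructor <;> linarith [abs_le.mp h, pi_gt_three]

lemma poissonIntegral_pos (n : ℕ) {b : ℝ} (hb : |b| ≤ 1) : 0 < poissonIntegral n b := by
  refine intervalIntegral.intervalIntegral_pos_of_pos_on
    (Continuous.intervalIntegrable (by fun_prop) _ _) (fun θ hθ => ?_) pi_pos
  exact mul_pos (cos_mul_cos_pos hb θ) (pow_pos (sin_pos_of_mem_Ioo hθ) _)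

lemma poissonIntegral_add_two_le (n : ℕ) {b : ℝ} (hb : |b| ≤ 1) :
    poissonIntegral (n + 2) b ≤ poissonIntegral n b := by
  refine intervalIntegral.integral_mono_on pi_pos.le
    (Continuous.intervalIntegrable (by fun_prop) _ _)
    (Continuous.intervalIntegrable (by fun_prop) _ _) fun θ _ => ?_
  gcongr ?_ * ?_
  · exact (cos_mul_cos_pos hb θ).le
  · rw [pow_mul, pow_mul]
    exact pow_le_pow_of_le_one (sq_nonneg _) (sin_sq_le_one θ) (by omega)

lemma poissonIntegral_le_integral_sin_pow (n : ℕ) (b : ℝ) :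
    poissonIntegral n b ≤ ∫ θ in 0..π, sin θ ^ (2 * n) := by
  refine intervalIntegral.integral_mono_on pi_pos.le
    (Continuous.intervalIntegrable (by fun_prop) _ _)
    (Continuous.intervalIntegrable (by fun_prop) _ _) fun θ _ => ?_
  have hs : 0 ≤ sin θ ^ (2 * n) := by rw [pow_mul]; positivity
  exact mul_le_of_le_one_left hs (cos_le_one _)

lemma poissonIntegral_one_le (b : ℝ) : poissonIntegral 1 b ≤ π / 2 := by
  have h := poissonIntegral_le_integral_sin_pow 1 b
  rw [integral_sin_pow_even] at h
  norm_num at h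
  linarith

lemma poissonIntegral_two_le (b : ℝ) : poissonIntegral 2 b ≤ 3 * π / 8 := by
  have h := poissonIntegral_le_integral_sin_pow 2 b
  rw [integral_sin_pow_even] at h
  norm_num [Finset.prod_range_succ] at h
  linarith

lemma le_poissonIntegral_zero (b : ℝ) : π * (1 - b ^ 2 / 4) ≤ poissonIntegral 0 b := by
  have hcos_sq : ∫ θ in 0..π, cos θ ^ 2 = π / 2 := by simp [integral_cos_sq]
  calc π * (1 - b ^ 2 / 4) = ∫ θ in 0..π, (1 - b ^ 2 / 2 * cos θ ^ 2) := by
        rw [intervalIntegral.integral_sub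
          (Continuous.intervalIntegrable (by fun_prop) _ _)
          (Continuous.intervalIntegrable (by fun_prop) _ _),
          intervalIntegral.integral_const_mul, hcos_sq]
        simp only [intervalIntegral.integral_const, sub_zero, smul_eq_mul, mul_one]
        ring
    _ ≤ poissonIntegral 0 b := by
        refine intervalIntegral.integral_mono_on pi_pos.le
          (Continuous.intervalIntegrable (by fun_prop) _ _)
          (Continuous.intervalIntegrable (by fun_prop) _ _) fun θ _ => ?_
        have := one_sub_sq_div_two_le_cos (x := b * cos θ)
        simp only [mul_zero, pow_zero, mul_one]
        linarith [show (b * cos θ) ^ 2 = b ^ 2 * cos θ ^ 2 by ring]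

lemma besselJ_pos (n : ℕ) {b : ℝ} (hb₀ : 0 < b) (hb₁ : b ≤ 1) : 0 < besselJ n b := by
  rw [besselJ_eq_mul_poissonIntegral]
  have := Gamma_pos_of_pos (by positivity : (0 : ℝ) < n + 1 / 2)
  exact mul_pos (by positivity) (poissonIntegral_pos n (abs_le.mpr ⟨by linarith, hb₁⟩))

lemma besselJ_zero_eq (b : ℝ) : besselJ 0 b = poissonIntegral 0 b / π := by
  rw [besselJ_eq_mul_poissonIntegral]
  norm_num [Gamma_one_half_eq, Real.mul_self_sqrt pi_pos.le]
  ring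

lemma besselJ_one_eq (b : ℝ) : besselJ 1 b = b / π * poissonIntegral 1 b := by
  rw [besselJ_eq_mul_poissonIntegral, show ((1 : ℕ) : ℝ) + 1 / 2 = 1 / 2 + 1 by norm_num,
    Gamma_add_one (by norm_num), Gamma_one_half_eq]
  field_simp
  rw [Real.sq_sqrt pi_pos.le]
  ring

/-- Comes from `Γ(n + 5/2) = (n + 3/2)(n + 1/2) Γ(n + 1/2)`. -/
lemma besselJ_add_two_mul (n : ℕ) (b : ℝ) :
    besselJ (n + 2) b * ((2 * n + 1) * (2 * n + 3) * poissonIntegral n b) =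
      b ^ 2 * besselJ n b * poissonIntegral (n + 2) b := by
  have hΓ : Gamma (((n + 2 : ℕ) : ℝ) + 1 / 2) =
      (n + 3 / 2) * ((n + 1 / 2) * Gamma ((n : ℝ) + 1 / 2)) := by
    rw [show ((n + 2 : ℕ) : ℝ) + 1 / 2 = (n + 1 / 2) + 1 + 1 by push_cast; ring,
      Gamma_add_one (by positivity), Gamma_add_one (by positivity)]
    ring
  have := Gamma_pos_of_pos (by positivity : (0 : ℝ) < n + 1 / 2)
  simp only [besselJ_eq_mul_poissonIntegral, hΓ]
  field_simp
  ring

lemma poissonIntegral_add_two_le_mul (n : ℕ) {b : ℝ} (hb : |b| ≤ 1) :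
    2 * (n + 1) * (n + 2) * poissonIntegral (n + 2) b ≤
      (2 * n + 1) * (2 * n + 3) * poissonIntegral n b := by
  rcases Nat.eq_zero_or_pos n with rfl | hn
  · have hb2 : b ^ 2 ≤ 1 := by nlinarith [sq_abs b, abs_nonneg b]
    have := le_poissonIntegral_zero b
    have := poissonIntegral_two_le b
    norm_num
    nlinarith [pi_pos]
  · have hn : (1 : ℝ) ≤ n := by exact_mod_cast hn
    have hmono := poissonIntegral_add_two_le n hb
    have hpos := poissonIntegral_pos (n + 2) hb
    calc 2 * (n + 1) * (n + 2) * poissonIntegral (n + 2) b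
        ≤ (2 * n + 1) * (2 * n + 3) * poissonIntegral (n + 2) b :=
          mul_le_mul_of_nonneg_right (by nlinarith) hpos.le
      _ ≤ (2 * n + 1) * (2 * n + 3) * poissonIntegral n b := by gcongr

lemma besselJ_add_two_le (n : ℕ) {b : ℝ} (hb₀ : 0 < b) (hb₁ : b ≤ 1) :
    2 * (n + 1) * (n + 2) * besselJ (n + 2) b ≤ b ^ 2 * besselJ n b := by
  have hb : |b| ≤ 1 := abs_le.mpr ⟨by linarith, hb₁⟩
  have hP := poissonIntegral_pos n hb
  have hJ := besselJ_pos n hb₀ hb₁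
  refine le_of_mul_le_mul_right ?_
    (by positivity : 0 < (2 * n + 1) * (2 * n + 3) * poissonIntegral n b)
  calc 2 * (n + 1) * (n + 2) * besselJ (n + 2) b * ((2 * n + 1) * (2 * n + 3) * poissonIntegral n b)
      = b ^ 2 * besselJ n b * (2 * (n + 1) * (n + 2) * poissonIntegral (n + 2) b) := by
        rw [mul_assoc, besselJ_add_two_mul]; ring
    _ ≤ b ^ 2 * besselJ n b * ((2 * n + 1) * (2 * n + 3) * poissonIntegral n b) :=
        mul_le_mul_of_nonneg_left (poissonIntegral_add_two_le_mul n hb) (by positivity)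

section cEig

variable {b : ℝ} (hb₀ : 0 < b) (hb₁ : b ≤ 1)
include hb₀ hb₁

lemma natCast_sub_cEig_eq {n : ℕ} (hn : n ≠ 0) :
    (n : ℝ) - cEig n b = 2 * n * (b ^ (2 * n) * besselJ (n + 1) b) /
      (besselJ (n - 1) b + b ^ (2 * n) * besselJ (n + 1) b) := by
  have := besselJ_pos (n - 1) hb₀ hb₁
  have := besselJ_pos (n + 1) hb₀ hb₁
  rw [cEig, if_neg hn]
  field_simp
  ring

lemma natCast_sub_cEig_nonneg {n : ℕ} (hn : n ≠ 0) : 0 ≤ (n : ℝ) - cEig n b := by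
  have := besselJ_pos (n - 1) hb₀ hb₁
  have := besselJ_pos (n + 1) hb₀ hb₁
  rw [natCast_sub_cEig_eq hb₀ hb₁ hn]
  positivity

lemma natCast_sub_cEig_le {n : ℕ} (hn : n ≠ 0) :
    (n : ℝ) - cEig n b ≤ b ^ (2 * n + 2) / (n + 1) := by
  obtain ⟨m, rfl⟩ := Nat.exists_eq_succ_of_ne_zero hn
  have hA := besselJ_pos m hb₀ hb₁
  have hX : 0 < b ^ (2 * (m + 1)) * besselJ (m + 2) b :=
    mul_pos (pow_pos hb₀ _) (besselJ_pos (m + 2) hb₀ hb₁)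
  have hkey := besselJ_add_two_le m hb₀ hb₁
  rw [natCast_sub_cEig_eq hb₀ hb₁ hn, Nat.succ_sub_one, div_le_div_iff₀ (by positivity)
    (by positivity)]
  push_cast
  calc 2 * (m + 1 : ℝ) * (b ^ (2 * (m + 1)) * besselJ (m + 2) b) * (m + 1 + 1)
      = b ^ (2 * (m + 1)) * (2 * (m + 1) * (m + 2) * besselJ (m + 2) b) := by ring
    _ ≤ b ^ (2 * (m + 1)) * (b ^ 2 * besselJ m b) := by gcongr
    _ ≤ b ^ (2 * (m + 1) + 2) * (besselJ m b + b ^ (2 * (m + 1)) * besselJ (m + 2) b) := by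
        rw [pow_add, mul_assoc]; gcongr; linarith

/-- The denominator stays away from zero because `|b log b| < 1`, `J₁(b) ≤ b/2` and
`J₀(b) ≥ 3/4`. -/
lemma abs_cEig_zero_le : |cEig 0 b| ≤ 2 * b ^ 2 := by
  have hJ₁ := besselJ_pos 1 hb₀ hb₁
  have hJ₁_le : besselJ 1 b ≤ b / 2 := by
    have := poissonIntegral_one_le b
    rw [besselJ_one_eq]
    calc b / π * poissonIntegral 1 b ≤ b / π * (π / 2) := by gcongr
      _ = b / 2 := by field_simp
  have hJ₀ : 3 / 4 ≤ besselJ 0 b := by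
    rw [besselJ_zero_eq, le_div_iff₀ pi_pos]
    have : b ^ 2 ≤ 1 := by nlinarith
    nlinarith [le_poissonIntegral_zero b, pi_pos]
  have hlog : -1 < b * log b := by
    have := abs_log_mul_self_lt b hb₀ hb₁
    linarith [(abs_lt.mp this).1, mul_comm b (log b)]
  have hD : 1 / 4 ≤ b * log b * besselJ 1 b + besselJ 0 b := by nlinarith
  rw [cEig, if_pos rfl, abs_div, abs_neg, abs_of_pos (by positivity), abs_of_pos (by linarith),
    div_le_iff₀ (by linarith)]
  nlinarith

lemma abs_cEig_sub_div_le (n : ℕ) : |cEig n b - n| / (1 + n) ≤ 2 * b ^ 2 := by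
  rcases eq_or_ne n 0 with rfl | hn
  · simpa using abs_cEig_zero_le hb₀ hb₁
  have h₀ := natCast_sub_cEig_nonneg hb₀ hb₁ hn
  have hn₁ : (1 : ℝ) ≤ n + 1 := by linarith [(n.cast_nonneg : (0 : ℝ) ≤ n)]
  calc |cEig n b - n| / (1 + n) ≤ n - cEig n b := by
        rw [abs_sub_comm, abs_of_nonneg h₀]
        exact div_le_self h₀ (by linarith)
    _ ≤ b ^ (2 * n + 2) / (n + 1) := natCast_sub_cEig_le hb₀ hb₁ hn
    _ ≤ b ^ 2 := (div_le_self (by positivity) hn₁).trans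
        (pow_le_pow_of_le_one hb₀.le hb₁ (by omega))
    _ ≤ 2 * b ^ 2 := by nlinarith [sq_nonneg b]

end cEig

open Topology in
lemma tendsto_iSup_abs_cEig_sub_div :
    Tendsto (fun b : ℝ => ⨆ n : ℕ, |cEig n b - n| / (1 + n)) (𝓝[Ioo 0 1] 0) (𝓝 0) := by
  refine squeeze_zero' (g := fun b : ℝ => 2 * b ^ 2) ?_ ?_ ?_
  · exact Eventually.of_forall fun b => Real.iSup_nonneg fun n => by positivity
  · filter_upwards [self_mem_nhdsWithin] with b hb
    exact ciSup_le (abs_cEig_sub_div_le hb.1 hb.2.le)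
  · have h : Continuous fun b : ℝ => 2 * b ^ 2 := by fun_prop
    simpa using (h.tendsto 0).mono_left nhdsWithin_le_nhds

lemma eLpNorm_stepPot_top {b : ℝ} (hb : 0 < b) : eLpNorm (stepPot b) ⊤ volume = 1 := by
  rw [stepPot, eLpNorm_indicator_const' measurableSet_ball
    (Metric.measure_ball_pos volume _ hb).ne' (by simp)]
  simp

theorem dtn_converges_to_free_eigenvalues :
    (∃ C > 0, ∀ b ∈ Set.Ioo (0 : ℝ) 1, |cEig 0 b| ≤ C * b ^ 2) ∧
    (∀ b ∈ Set.Ioo (0 : ℝ) 1, ∀ n : ℕ, 1 ≤ n →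
        0 ≤ (n : ℝ) - cEig n b ∧ (n : ℝ) - cEig n b ≤ b ^ (2 * n + 2) / (n + 1)) ∧
    Filter.Tendsto (fun b : ℝ => ⨆ n : ℕ, |cEig n b - n| / (1 + n))
      (nhdsWithin 0 (Set.Ioo (0 : ℝ) 1)) (nhds 0) ∧
    ∀ b ∈ Set.Ioo (0 : ℝ) 1, eLpNorm (stepPot b - 0) ⊤ volume = 1 := by
  refine ⟨⟨2, two_pos, fun b hb => abs_cEig_zero_le hb.1 hb.2.le⟩,
    fun b hb n hn => ?_, tendsto_iSup_abs_cEig_sub_div, fun b hb => ?_⟩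
  · have hn : n ≠ 0 := Nat.one_le_iff_ne_zero.mp hn
    exact ⟨natCast_sub_cEig_nonneg hb.1 hb.2.le hn, natCast_sub_cEig_le hb.1 hb.2.le hn⟩
  · rw [sub_zero, eLpNorm_stepPot_top hb.1]
end

section
/- Let b_1, b_2 ∈ (0,1) and γ_1, γ_2 ∈ [0,1]. Define J⃗_1 = | b_2² S_2(b_2 √γ_2) − b_1² S_2(b_1 √γ_1) |, J⃗_2 = (1/8) | b_2⁴ γ_2 S_0(b_1 √γ_1) − b_1⁴ γ_1 S_0(b_2 √γ_2) |, and J⃗_3 = | b_2² S_0(b_1 √γ_1) S_2(b_2 √γ_2) − b_1² S_0(b_2 √γ_2) S_2(b_1 √γ_1) |. Then |F(b_1,γ_1) − F(b_2,γ_2)| ≥ 2 ( (1/8) | b_2⁴ γ_2 − b_1⁴ γ_1 | − J⃗_1 − J⃗_2 − J⃗_3 ) / ( (1 + b_1⁴ γ_1 / 8)(1 + b_2⁴ γ_2 / 8) ). -/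
open Real Set

/-- The remainder `S_n(r) = J_n(r) − r^n/(2^n n!)`. -/
noncomputable def besselS (n : ℕ) (r : ℝ) : ℝ :=
  besselJ n r - r ^ n / (2 ^ n * Nat.factorial n)

/-- `F(b,γ)`, the first eigenvalue `c₁(b,γ)` of the Dirichlet-to-Neumann map for the
one-step radial potential `q = γ χ_{(0,b)}(|x|)` on the unit disk. -/
noncomputable def dtnF (b γ : ℝ) : ℝ :=
  (besselJ 0 (b * Real.sqrt γ) - b ^ 2 * besselJ 2 (b * Real.sqrt γ)) /
    (besselJ 0 (b * Real.sqrt γ) + b ^ 2 * besselJ 2 (b * Real.sqrt γ))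


/-! For `|r| ≤ 1` the Poisson integrals give `J₀(r) ∈ (0, 1]` and `J₂(r) ∈ [0, r²/8]`, since
`cos (r t) ∈ [cos 1, 1]` on `[-1, 1]` and the weights `(1 - t²)^(-1/2)`, `(1 - t²)^(3/2)` have
masses `π` and `3π/8`. With `A = J₀` and `c = b² J₂`, `F = (A - c)/(A + c)`, so
`F₁ - F₂ = 2 (A₁ c₂ - A₂ c₁) / ((A₁ + c₁)(A₂ + c₂))` with denominators in `(0, 1 + b⁴γ/8]`.
Substituting `A = 1 + S₀` and `c = b⁴γ/8 + b² S₂` splits the numerator into the leading term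
`(b₂⁴γ₂ - b₁⁴γ₁)/8` plus the three remainders, which the triangle inequality discards. -/

open MeasureTheory intervalIntegral

lemma hasDerivAt_arcsin_eq_rpow {x : ℝ} (hx : x ∈ Ioo (-1 : ℝ) 1) :
    HasDerivAt arcsin ((1 - x ^ 2) ^ (-(1 / 2) : ℝ)) x := by
  have h := hasDerivAt_arcsin hx.1.ne' hx.2.ne
  rwa [one_div, sqrt_eq_rpow, ← rpow_neg (by nlinarith [hx.1, hx.2])] at h

lemma intervalIntegrable_one_sub_sq_rpow_neg_half :
    IntervalIntegrable (fun t : ℝ => (1 - t ^ 2) ^ (-(1 / 2) : ℝ)) volume (-1) 1 :=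
  (intervalIntegrable_iff_integrableOn_Ioc_of_le (by norm_num)).2 <|
    integrableOn_deriv_of_nonneg continuous_arcsin.continuousOn
      (fun _ hx => hasDerivAt_arcsin_eq_rpow hx)
      fun _ hx => rpow_nonneg (by nlinarith [hx.1, hx.2]) _

lemma integral_one_sub_sq_rpow_neg_half :
    ∫ t in (-1 : ℝ)..1, (1 - t ^ 2) ^ (-(1 / 2) : ℝ) = π := by
  rw [integral_eq_sub_of_hasDerivAt_of_le (by norm_num) continuous_arcsin.continuousOn
    (fun _ hx => hasDerivAt_arcsin_eq_rpow hx) intervalIntegrable_one_sub_sq_rpow_neg_half,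
    arcsin_one, arcsin_neg_one]
  ring

lemma integral_one_sub_sq_rpow_half (n : ℕ) :
    ∫ t in (-1 : ℝ)..1, (1 - t ^ 2) ^ ((n : ℝ) / 2) = ∫ x in (-(π / 2))..(π / 2), cos x ^ (n + 1) :=
  calc
    _ = ∫ t in sin (-(π / 2))..sin (π / 2), (1 - t ^ 2) ^ ((n : ℝ) / 2) := by
          rw [sin_neg, sin_pi_div_two]
    _ = ∫ x in (-(π / 2))..(π / 2), (1 - sin x ^ 2) ^ ((n : ℝ) / 2) * cos x :=
          (integral_comp_mul_deriv (fun x _ => hasDerivAt_sin x) continuousOn_cos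
            (by fun_prop (disch := positivity))).symm
    _ = ∫ x in (-(π / 2))..(π / 2), cos x ^ (n + 1) := by
          refine integral_congr fun x hx => ?_
          rw [uIcc_of_le (by linarith [pi_pos])] at hx
          have hcos : 0 ≤ cos x := cos_nonneg_of_mem_Icc hx
          rw [← cos_sq', ← rpow_natCast (cos x) 2, ← rpow_mul hcos,
            show ((2 : ℕ) : ℝ) * (n / 2) = n by push_cast; ring, rpow_natCast, pow_succ]

lemma integral_one_sub_sq_rpow_three_halves :
    ∫ t in (-1 : ℝ)..1, (1 - t ^ 2) ^ (((3 : ℕ) : ℝ) / 2) = 3 * π / 8 := by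
  rw [integral_one_sub_sq_rpow_half, integral_cos_pow, integral_cos_sq]
  simp only [cos_neg, cos_pi_div_two, sin_neg, sin_pi_div_two]
  push_cast
  ring

lemma cos_one_le_cos_mul {r t : ℝ} (hr : |r| ≤ 1) (ht : t ∈ Icc (-1 : ℝ) 1) :
    cos 1 ≤ cos (r * t) := by
  rw [← cos_abs (r * t)]
  refine cos_le_cos_of_nonneg_of_le_pi (abs_nonneg _) (by linarith [pi_gt_three]) ?_
  rw [abs_mul]
  exact mul_le_one₀ hr (abs_nonneg t) (abs_le.2 ht)

lemma integral_cos_mul_mem_Icc {w : ℝ → ℝ} {r : ℝ} (hr : |r| ≤ 1)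
    (hw : IntervalIntegrable w volume (-1) 1) (hw_nonneg : ∀ t ∈ Icc (-1 : ℝ) 1, 0 ≤ w t) :
    ∫ t in (-1 : ℝ)..1, cos (r * t) * w t ∈
      Icc (cos 1 * ∫ t in (-1 : ℝ)..1, w t) (∫ t in (-1 : ℝ)..1, w t) := by
  have hcw : IntervalIntegrable (fun t => cos (r * t) * w t) volume (-1) 1 :=
    hw.continuousOn_mul (by fun_prop)
  constructor
  · rw [← intervalIntegral.integral_const_mul]
    exact integral_mono_on (by norm_num) (hw.const_mul _) hcw fun t ht =>
      mul_le_mul_of_nonneg_right (cos_one_le_cos_mul hr ht) (hw_nonneg t ht)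
  · exact integral_mono_on (by norm_num) hcw hw fun t ht =>
      mul_le_of_le_one_left (hw_nonneg t ht) (cos_le_one _)

lemma besselJ_zero_eq_s19 (r : ℝ) :
    besselJ 0 r = (∫ t in (-1 : ℝ)..1, cos (r * t) * (1 - t ^ 2) ^ (-(1 / 2) : ℝ)) / π := by
  rw [besselJ, show ((0 : ℕ) : ℝ) - 1 / 2 = -(1 / 2) by norm_num,
    show ((0 : ℕ) : ℝ) + 1 / 2 = 1 / 2 by norm_num, Gamma_one_half_eq,
    pow_zero, pow_zero, one_mul, mul_self_sqrt pi_pos.le]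
  ring

lemma besselJ_two_eq (r : ℝ) :
    besselJ 2 r = r ^ 2 / (3 * π) *
      ∫ t in (-1 : ℝ)..1, cos (r * t) * (1 - t ^ 2) ^ (((3 : ℕ) : ℝ) / 2) := by
  have hΓ : Gamma (((2 : ℕ) : ℝ) + 1 / 2) = 3 / 4 * √π := by
    rw [show ((2 : ℕ) : ℝ) + 1 / 2 = 1 / 2 + 1 + 1 by norm_num, Gamma_add_one (by norm_num),
      Gamma_add_one (by norm_num), Gamma_one_half_eq]
    ring
  rw [besselJ, show ((2 : ℕ) : ℝ) - 1 / 2 = ((3 : ℕ) : ℝ) / 2 by norm_num, hΓ]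
  field_simp
  rw [sq_sqrt pi_pos.le]
  ring

lemma besselJ_zero_mem_Ioc {r : ℝ} (hr : |r| ≤ 1) : besselJ 0 r ∈ Ioc 0 1 := by
  obtain ⟨hlow, hup⟩ := integral_cos_mul_mem_Icc hr intervalIntegrable_one_sub_sq_rpow_neg_half
    fun t ht => rpow_nonneg (by nlinarith [ht.1, ht.2]) _
  rw [integral_one_sub_sq_rpow_neg_half] at hlow hup
  rw [besselJ_zero_eq_s19]
  exact ⟨div_pos ((mul_pos cos_one_pos pi_pos).trans_le hlow) pi_pos,
    (div_le_one pi_pos).2 hup⟩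

lemma besselJ_two_mem_Icc {r : ℝ} (hr : |r| ≤ 1) : besselJ 2 r ∈ Icc 0 (r ^ 2 / 8) := by
  obtain ⟨hlow, hup⟩ := integral_cos_mul_mem_Icc (w := fun t => (1 - t ^ 2) ^ (((3 : ℕ) : ℝ) / 2))
    hr (Continuous.intervalIntegrable (by fun_prop (disch := positivity)) _ _)
    fun t ht => rpow_nonneg (by nlinarith [ht.1, ht.2]) _
  rw [integral_one_sub_sq_rpow_three_halves] at hlow hup
  have hcoef : 0 ≤ r ^ 2 / (3 * π) := by positivity
  rw [besselJ_two_eq]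
  refine ⟨mul_nonneg hcoef ((mul_nonneg cos_one_pos.le (by positivity)).trans hlow), ?_⟩
  calc _ ≤ r ^ 2 / (3 * π) * (3 * π / 8) := mul_le_mul_of_nonneg_left hup hcoef
    _ = r ^ 2 / 8 := by field_simp

lemma besselJ_zero_eq_one_add_besselS (r : ℝ) : besselJ 0 r = 1 + besselS 0 r := by
  simp [besselS]

lemma sq_mul_besselJ_two_mul_sqrt {b γ : ℝ} (hγ : 0 ≤ γ) :
    b ^ 2 * besselJ 2 (b * √γ) = b ^ 4 * γ / 8 + b ^ 2 * besselS 2 (b * √γ) := by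
  simp only [besselS, mul_pow, sq_sqrt hγ, Nat.factorial]
  ring

lemma abs_mul_sqrt_le_one {b γ : ℝ} (hb : |b| ≤ 1) (hγ : γ ≤ 1) : |b * √γ| ≤ 1 := by
  rw [abs_mul, abs_of_nonneg (sqrt_nonneg γ)]
  exact mul_le_one₀ hb (sqrt_nonneg γ) (sqrt_le_one.2 hγ)

lemma besselJ_zero_add_sq_mul_besselJ_two_pos {r : ℝ} (b : ℝ) (hr : |r| ≤ 1) :
    0 < besselJ 0 r + b ^ 2 * besselJ 2 r :=
  add_pos_of_pos_of_nonneg (besselJ_zero_mem_Ioc hr).1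
    (mul_nonneg (sq_nonneg b) (besselJ_two_mem_Icc hr).1)

lemma besselJ_zero_add_sq_mul_besselJ_two_le {b γ : ℝ} (hb : |b| ≤ 1) (hγ : γ ∈ Icc (0 : ℝ) 1) :
    besselJ 0 (b * √γ) + b ^ 2 * besselJ 2 (b * √γ) ≤ 1 + b ^ 4 * γ / 8 := by
  have hr := abs_mul_sqrt_le_one hb hγ.2
  have hJ : b ^ 2 * besselJ 2 (b * √γ) ≤ b ^ 2 * ((b * √γ) ^ 2 / 8) :=
    mul_le_mul_of_nonneg_left (besselJ_two_mem_Icc hr).2 (sq_nonneg b)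
  rw [mul_pow, sq_sqrt hγ.1] at hJ
  linarith [(besselJ_zero_mem_Ioc hr).2]

lemma sub_div_add_sub_sub_div_add {K : Type*} [Field K] {a₁ c₁ a₂ c₂ : K}
    (h₁ : a₁ + c₁ ≠ 0) (h₂ : a₂ + c₂ ≠ 0) :
    (a₁ - c₁) / (a₁ + c₁) - (a₂ - c₂) / (a₂ + c₂) =
      2 * (a₁ * c₂ - a₂ * c₁) / ((a₁ + c₁) * (a₂ + c₂)) := by
  field_simp
  ring

lemma div_le_div_of_le_of_le {N M P D : ℝ} (hNM : N ≤ M) (hM : 0 ≤ M) (hP : 0 < P)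
    (hPD : P ≤ D) : N / D ≤ M / P := by
  rcases le_or_gt N 0 with hN | hN
  · exact (div_nonpos_of_nonpos_of_nonneg hN (hP.le.trans hPD)).trans (div_nonneg hM hP.le)
  · exact div_le_div₀ hM hNM hP hPD

lemma abs_sub_abs_sub_abs_sub_abs_le_abs_add_add_add {α : Type*} [AddCommGroup α] [LinearOrder α]
    [IsOrderedAddMonoid α] (a x y z : α) : |a| - |x| - |y| - |z| ≤ |a + x + y + z| :=
  calc
    _ ≤ |a + x| - |y| - |z| := sub_le_sub_right (sub_le_sub_right (abs_sub_abs_le_abs_add a x) _) _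
    _ ≤ |a + x + y| - |z| := sub_le_sub_right (abs_sub_abs_le_abs_add _ y) _
    _ ≤ _ := abs_sub_abs_le_abs_add _ z

lemma le_abs_one_add_mul_sub_one_add_mul (p₁ p₂ c₁ c₂ s₁ s₂ u₁ u₂ : ℝ) :
    1 / 8 * |p₂ - p₁| - |c₂ * u₂ - c₁ * u₁| - 1 / 8 * |p₂ * s₁ - p₁ * s₂|
        - |c₂ * s₁ * u₂ - c₁ * s₂ * u₁| ≤
      |(1 + s₁) * (p₂ / 8 + c₂ * u₂) - (1 + s₂) * (p₁ / 8 + c₁ * u₁)| :=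
  calc
    _ = |(p₂ - p₁) / 8| - |c₂ * u₂ - c₁ * u₁| - |(p₂ * s₁ - p₁ * s₂) / 8|
          - |c₂ * s₁ * u₂ - c₁ * s₂ * u₁| := by
        simp only [abs_div, abs_of_pos (by norm_num : (0 : ℝ) < 8)]
        ring
    _ ≤ |(p₂ - p₁) / 8 + (c₂ * u₂ - c₁ * u₁) + (p₂ * s₁ - p₁ * s₂) / 8
          + (c₂ * s₁ * u₂ - c₁ * s₂ * u₁)| :=
        abs_sub_abs_sub_abs_sub_abs_le_abs_add_add_add _ _ _ _
    _ = _ := by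
        congr 1
        ring

theorem dtnF_difference_lower_bound (b₁ b₂ γ₁ γ₂ : ℝ) (hb₁ : b₁ ∈ Set.Ioo (0 : ℝ) 1)
    (hb₂ : b₂ ∈ Set.Ioo (0 : ℝ) 1) (hγ₁ : γ₁ ∈ Set.Icc (0 : ℝ) 1)
    (hγ₂ : γ₂ ∈ Set.Icc (0 : ℝ) 1) :
    |dtnF b₁ γ₁ - dtnF b₂ γ₂| ≥
      2 * (1 / 8 * |b₂ ^ 4 * γ₂ - b₁ ^ 4 * γ₁|
          - |b₂ ^ 2 * besselS 2 (b₂ * Real.sqrt γ₂) - b₁ ^ 2 * besselS 2 (b₁ * Real.sqrt γ₁)|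
          - 1 / 8 * |b₂ ^ 4 * γ₂ * besselS 0 (b₁ * Real.sqrt γ₁)
              - b₁ ^ 4 * γ₁ * besselS 0 (b₂ * Real.sqrt γ₂)|
          - |b₂ ^ 2 * besselS 0 (b₁ * Real.sqrt γ₁) * besselS 2 (b₂ * Real.sqrt γ₂)
              - b₁ ^ 2 * besselS 0 (b₂ * Real.sqrt γ₂) * besselS 2 (b₁ * Real.sqrt γ₁)|) /
        ((1 + b₁ ^ 4 * γ₁ / 8) * (1 + b₂ ^ 4 * γ₂ / 8)) := by
  have hb₁' : |b₁| ≤ 1 := abs_le.2 ⟨by linarith [hb₁.1], hb₁.2.le⟩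
  have hb₂' : |b₂| ≤ 1 := abs_le.2 ⟨by linarith [hb₂.1], hb₂.2.le⟩
  have hP₁ := besselJ_zero_add_sq_mul_besselJ_two_pos b₁ (abs_mul_sqrt_le_one hb₁' hγ₁.2)
  have hP₂ := besselJ_zero_add_sq_mul_besselJ_two_pos b₂ (abs_mul_sqrt_le_one hb₂' hγ₂.2)
  have hPD₁ := besselJ_zero_add_sq_mul_besselJ_two_le hb₁' hγ₁
  have hPD₂ := besselJ_zero_add_sq_mul_besselJ_two_le hb₂' hγ₂
  rw [ge_iff_le, dtnF, dtnF, sub_div_add_sub_sub_div_add hP₁.ne' hP₂.ne', abs_div,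
    abs_of_pos (mul_pos hP₁ hP₂)]
  refine div_le_div_of_le_of_le ?_ (abs_nonneg _) (mul_pos hP₁ hP₂)
    (mul_le_mul hPD₁ hPD₂ hP₂.le (hP₁.le.trans hPD₁))
  rw [abs_mul, abs_two, besselJ_zero_eq_one_add_besselS, besselJ_zero_eq_one_add_besselS,
    sq_mul_besselJ_two_mul_sqrt hγ₁.1, sq_mul_besselJ_two_mul_sqrt hγ₂.1]
  exact mul_le_mul_of_nonneg_left (le_abs_one_add_mul_sub_one_add_mul _ _ _ _ _ _ _ _) zero_le_two
end
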